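/- arXiv:1507.00662 — 6 statements merged into one kernel-verified Lean document; each statement's English description precedes it below -/
import Mathlib

section
/- Let k ≥ 2 and θ be integers with 1 ≤ θ ≤ k−1. Let a : [k] × [k] → ℝ be a matrix with nonnegative entries, and let r_i = Σ_{j∈[k]} a_{ij} and c_j = Σ_{i∈[k]} a_{ij} denote its row and column sums. Then Σ_{i,j∈[k], i+θ≤j} r_i · c_j ≥ ((k−θ+1)/(2(k−θ))) · (Σ_{i,j∈[k], i+θ≤j} a_{ij})². -/
/-! Let `F j` be the mass of column `j` in the region `i + θ ≤ j`, so that the right-hand side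
is a multiple of `(∑ F)^2`. As the region grows with `j`, the left-hand side dominates
`∑_j F j * ∑_{j' ≤ j} F j' = ((∑ F)^2 + ∑ F^2) / 2`, and Cauchy–Schwarz over the `k - θ` columns
that can carry mass gives `(k - θ) * ∑ F^2 ≥ (∑ F)^2`. -/

open Finset

section PrefixSums

variable {ι : Type*} [LinearOrder ι]

theorem two_mul_sum_mul_prefix_sum_eq {R : Type*} [CommRing R] (s : Finset ι) (f : ι → R) :
    2 * ∑ j ∈ s, f j * ∑ j' ∈ s with j' ≤ j, f j' =
      (∑ j ∈ s, f j) ^ 2 + ∑ j ∈ s, f j ^ 2 := by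
  induction s using Finset.induction_on_max with
  | empty => simp
  | insert a s hlt ih =>
    have has : a ∉ s := fun h => lt_irrefl a (hlt a h)
    have hfilter_a : {j' ∈ insert a s | j' ≤ a} = insert a s :=
      filter_true_of_mem fun j hj => (mem_insert.1 hj).elim le_of_eq fun h => (hlt j h).le
    have hrest : ∑ j ∈ s, f j * ∑ j' ∈ insert a s with j' ≤ j, f j' =
        ∑ j ∈ s, f j * ∑ j' ∈ s with j' ≤ j, f j' :=
      sum_congr rfl fun j hj => by rw [filter_insert, if_neg (hlt j hj).not_ge]
    rw [sum_insert has, hfilter_a, hrest, sum_insert has, sum_insert has]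
    linear_combination ih

theorem card_add_one_mul_sq_sum_le_of_support_subset {s t : Finset ι} (hts : t ⊆ s)
    (f : ι → ℝ) (hf : ∀ j ∈ s, j ∉ t → f j = 0) :
    (#t + 1) * (∑ j ∈ s, f j) ^ 2 ≤ 2 * #t * ∑ j ∈ s, f j * ∑ j' ∈ s with j' ≤ j, f j' := by
  have hCS : (∑ j ∈ s, f j) ^ 2 ≤ #t * ∑ j ∈ s, f j ^ 2 := by
    rw [← sum_subset hts hf]
    calc (∑ j ∈ t, f j) ^ 2 ≤ #t * ∑ j ∈ t, f j ^ 2 := sq_sum_le_card_mul_sum_sq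
      _ ≤ #t * ∑ j ∈ s, f j ^ 2 := by gcongr
  calc (#t + 1) * (∑ j ∈ s, f j) ^ 2 = #t * (∑ j ∈ s, f j) ^ 2 + (∑ j ∈ s, f j) ^ 2 := by ring
    _ ≤ #t * ((∑ j ∈ s, f j) ^ 2 + ∑ j ∈ s, f j ^ 2) := by linarith
    _ = 2 * #t * ∑ j ∈ s, f j * ∑ j' ∈ s with j' ≤ j, f j' := by
      rw [← two_mul_sum_mul_prefix_sum_eq]; ring

end PrefixSums

theorem sum_mul_prefix_sum_le_sum_rowSum_mul_colSum {ι : Type*} [LE ι] [DecidableLE ι]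
    (s : Finset ι) (R : ι → ι → Prop) [DecidableRel R]
    (hR : ∀ i j' j, R i j' → j' ≤ j → R i j) (a : ι → ι → ℝ)
    (ha : ∀ i ∈ s, ∀ j ∈ s, 0 ≤ a i j) :
    ∑ j ∈ s, (∑ i ∈ s with R i j, a i j) *
        ∑ j' ∈ s with j' ≤ j, ∑ i ∈ s with R i j', a i j'
      ≤ ∑ p ∈ (s ×ˢ s).filter (fun p => R p.1 p.2),
          (∑ j ∈ s, a p.1 j) * (∑ i ∈ s, a i p.2) := by
  rw [sum_filter, sum_product_right]
  refine sum_le_sum fun j hj => ?_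
  dsimp only
  rw [← sum_filter, ← sum_mul, mul_comm]
  have hcol : ∑ i ∈ s with R i j, a i j ≤ ∑ i ∈ s, a i j :=
    sum_le_sum_of_subset_of_nonneg (filter_subset _ _) fun i hi _ => ha i hi j hj
  have hprefix : ∑ j' ∈ s with j' ≤ j, ∑ i ∈ s with R i j', a i j'
      ≤ ∑ i ∈ s with R i j, ∑ j' ∈ s, a i j' :=
    calc ∑ j' ∈ s with j' ≤ j, ∑ i ∈ s with R i j', a i j'
        ≤ ∑ j' ∈ s with j' ≤ j, ∑ i ∈ s with R i j, a i j' := by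
          refine sum_le_sum fun j' hj' => sum_le_sum_of_subset_of_nonneg ?_ ?_
          · exact monotone_filter_right _ fun i _ h => hR i j' j h (mem_filter.1 hj').2
          · exact fun i hi _ => ha i (mem_filter.1 hi).1 j' (mem_filter.1 hj').1
      _ ≤ ∑ j' ∈ s, ∑ i ∈ s with R i j, a i j' :=
          sum_le_sum_of_subset_of_nonneg (filter_subset _ _) fun j' hj' _ =>
            sum_nonneg fun i hi => ha i (mem_filter.1 hi).1 j' hj'
      _ = ∑ i ∈ s with R i j, ∑ j' ∈ s, a i j' := sum_comm
  exact mul_le_mul hprefix hcol (sum_nonneg fun i hi => ha i (mem_filter.1 hi).1 j hj)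
    (sum_nonneg fun i hi => sum_nonneg fun j' hj' => ha i (mem_filter.1 hi).1 j' hj')

theorem stmt_0_general (k θ : ℕ) (hθk : θ + 1 ≤ k)
    (a : ℕ → ℕ → ℝ)
    (ha : ∀ i ∈ Icc 1 k, ∀ j ∈ Icc 1 k, 0 ≤ a i j) :
    ∑ p ∈ (Icc 1 k ×ˢ Icc 1 k).filter (fun p => p.1 + θ ≤ p.2),
        (∑ j ∈ Icc 1 k, a p.1 j) * (∑ i ∈ Icc 1 k, a i p.2)
      ≥ (((k : ℝ) - θ + 1) / (2 * ((k : ℝ) - θ))) *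
        (∑ p ∈ (Icc 1 k ×ˢ Icc 1 k).filter (fun p => p.1 + θ ≤ p.2), a p.1 p.2) ^ 2 := by
  set F : ℕ → ℝ := fun j => ∑ i ∈ Icc 1 k with i + θ ≤ j, a i j
  have htotal : ∑ p ∈ (Icc 1 k ×ˢ Icc 1 k).filter (fun p => p.1 + θ ≤ p.2), a p.1 p.2 =
      ∑ j ∈ Icc 1 k, F j := by
    rw [sum_filter, sum_product_right]
    exact sum_congr rfl fun j _ => (sum_filter _ _).symm
  -- `1 ≤ i` forces `θ + 1 ≤ j`.
  have hsupport : ∀ j ∈ Icc 1 k, j ∉ Icc (θ + 1) k → F j = 0 := fun j hj hj' =>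
    sum_eq_zero fun i hi => by simp only [mem_filter, mem_Icc] at hi hj hj'; omega
  have hcard : ((#(Icc (θ + 1) k) : ℕ) : ℝ) = k - θ := by
    rw [Nat.card_Icc, Nat.cast_sub (by omega)]; push_cast; ring
  have hbound := card_add_one_mul_sq_sum_le_of_support_subset
    (Icc_subset_Icc_left (by omega)) F hsupport
  have hcompare := sum_mul_prefix_sum_le_sum_rowSum_mul_colSum (Icc 1 k)
    (fun i j => i + θ ≤ j) (fun _ _ _ h h' => h.trans h') a ha
  have hpos : (0 : ℝ) < k - θ := by
    rw [sub_pos]; exact_mod_cast Nat.lt_of_succ_le hθk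
  rw [hcard] at hbound
  rw [ge_iff_le, htotal, div_mul_eq_mul_div, div_le_iff₀ (by positivity)]
  linarith [mul_le_mul_of_nonneg_left hcompare (by positivity : (0 : ℝ) ≤ 2 * (k - θ))]

/-- Let `k ≥ 2` and `θ` be integers with `1 ≤ θ ≤ k−1`. For a
nonnegative matrix `a` indexed by `[k] × [k]` with row sums `r i = ∑ j, a i j` and
column sums `c j = ∑ i, a i j`, we have
`∑_{i+θ≤j} r i * c j ≥ ((k−θ+1)/(2(k−θ))) * (∑_{i+θ≤j} a i j)^2`. -/
theorem stmt_0 (k θ : ℕ) (hk : 2 ≤ k) (hθ1 : 1 ≤ θ) (hθk : θ + 1 ≤ k)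
    (a : ℕ → ℕ → ℝ)
    (ha : ∀ i ∈ Icc 1 k, ∀ j ∈ Icc 1 k, 0 ≤ a i j) :
    ∑ p ∈ (Icc 1 k ×ˢ Icc 1 k).filter (fun p => p.1 + θ ≤ p.2),
        (∑ j ∈ Icc 1 k, a p.1 j) * (∑ i ∈ Icc 1 k, a i p.2)
      ≥ (((k : ℝ) - θ + 1) / (2 * ((k : ℝ) - θ))) *
        (∑ p ∈ (Icc 1 k ×ˢ Icc 1 k).filter (fun p => p.1 + θ ≤ p.2), a p.1 p.2) ^ 2 :=
  stmt_0_general k θ hθk a ha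
end

section
/- Let k ≥ 2 be an integer. Let x^u, x^v : [k] → ℝ be nonnegative with Σ_{i∈[k]} x^u_i = 1 and Σ_{i∈[k]} x^v_i = 1, and let y : [k] × [k] → ℝ be nonnegative with Σ_{j∈[k]} y_{ij} = x^u_i for every i ∈ [k] and Σ_{i∈[k]} y_{ij} = x^v_j for every j ∈ [k]. Then Σ_{i,j∈[k], i<j} (1/(2k) + x^u_i/2) · (1/(2k) + x^v_j/2) ≥ (1/2) · Σ_{i,j∈[k], i<j} y_{ij}. (In particular, independently assigning each endpoint of an edge label i with probability 1/(2k) + x_i/2 satisfies the edge with probability at least half its LP contribution.) -/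
/-!
Let `F = ∑_{i<j} y i j`. For any threshold `t`, every pair `i < j` has `i < t` or `t < j`, so
`F ≤ ∑_{i<t} xu i + ∑_{j>t} xv j` by the row and column sums. Averaging over `t` uniformly gives
`k F ≤ ∑_{i<j} (xu i + xv j)`, and averaging with weights `xu t` gives
`F ≤ ∑_{i<j} xu i (xu j + xv j)`. With `c = 1/(2k)`, expanding the product on the left and
inserting these two bounds leaves `F/2` plus `c² · k(k-1)/2 - (∑_{i<j} xu i xu j)/4`, which is
nonnegative by Cauchy–Schwarz.
-/

open Finset

def ltPairs {α : Type*} [LinearOrder α] (s : Finset α) : Finset (α × α) :=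
  (s ×ˢ s).filter (fun p => p.1 < p.2)

section LtPairs

variable {α R : Type*} [LinearOrder α] (s : Finset α)

theorem sum_ltPairs [AddCommMonoid R] (f : α → α → R) :
    ∑ p ∈ ltPairs s, f p.1 p.2 = ∑ i ∈ s, ∑ j ∈ s, if i < j then f i j else 0 := by
  rw [ltPairs, sum_filter, sum_product]

theorem sum_sum_eq_sum_ltPairs_add [AddCommMonoid R] (f : α → α → R) :
    ∑ i ∈ s, ∑ j ∈ s, f i j
      = ∑ p ∈ ltPairs s, f p.1 p.2 + ∑ p ∈ ltPairs s, f p.2 p.1 + ∑ i ∈ s, f i i := by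
  have hdiag : ∑ i ∈ s, f i i = ∑ i ∈ s, ∑ j ∈ s, if i = j then f i j else 0 := by
    simp
  rw [sum_ltPairs, sum_ltPairs s fun i j => f j i, hdiag, sum_comm (t := s) (s := s)
    (f := fun i j => if i < j then f j i else 0), ← sum_add_distrib, ← sum_add_distrib]
  refine sum_congr rfl fun i _ => ?_
  rw [← sum_add_distrib, ← sum_add_distrib]
  refine sum_congr rfl fun j _ => ?_
  rcases lt_trichotomy i j with h | rfl | h
  · simp [h, h.ne, h.not_gt]
  · simp
  · simp [h, h.ne', h.not_gt]

theorem two_mul_sum_ltPairs_mul_add_sum_sq [CommSemiring R] (a : α → R) :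
    2 * ∑ p ∈ ltPairs s, a p.1 * a p.2 + ∑ i ∈ s, a i ^ 2 = (∑ i ∈ s, a i) ^ 2 := by
  rw [sq, sum_mul_sum, sum_sum_eq_sum_ltPairs_add]
  simp only [mul_comm (a _) (a _), sq]
  ring

theorem two_mul_card_ltPairs_add_card : 2 * #(ltPairs s) + #s = #s ^ 2 := by
  simpa using two_mul_sum_ltPairs_mul_add_sum_sq s (fun _ => (1 : ℕ))

theorem two_mul_card_mul_sum_ltPairs_mul_le {K : Type*} [Field K] [LinearOrder K]
    [IsStrictOrderedRing K] (a : α → K) :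
    2 * #s * ∑ p ∈ ltPairs s, a p.1 * a p.2 ≤ (#s - 1) * (∑ i ∈ s, a i) ^ 2 := by
  have := two_mul_sum_ltPairs_mul_add_sum_sq s a
  have := sq_sum_le_card_mul_sum_sq (s := s) (f := a)
  nlinarith

theorem sum_ltPairs_le_sum_lt_add_sum_gt [AddCommMonoid R] [PartialOrder R]
    [IsOrderedAddMonoid R] {y : α → α → R} {a b : α → R}
    (hy : ∀ i ∈ s, ∀ j ∈ s, 0 ≤ y i j)
    (hrow : ∀ i ∈ s, ∑ j ∈ s, y i j = a i) (hcol : ∀ j ∈ s, ∑ i ∈ s, y i j = b j) (t : α) :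
    ∑ p ∈ ltPairs s, y p.1 p.2 ≤ ∑ i ∈ s with i < t, a i + ∑ j ∈ s with t < j, b j := by
  have hsplit : ∑ i ∈ s with i < t, a i + ∑ j ∈ s with t < j, b j
      = ∑ i ∈ s, ∑ j ∈ s, ((if i < t then y i j else 0) + if t < j then y i j else 0) := by
    rw [← sum_congr rfl fun i hi => hrow i (mem_filter.1 hi).1,
      ← sum_congr rfl fun j hj => hcol j (mem_filter.1 hj).1, sum_filter, sum_filter]
    simp only [sum_add_distrib]
    rw [sum_comm (s := s) (t := s) (f := fun i j => if t < j then y i j else 0)]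
    simp only [sum_ite_irrel, sum_const_zero]
  rw [hsplit, sum_ltPairs]
  refine sum_le_sum fun i hi => sum_le_sum fun j hj => ?_
  have := hy i hi j hj
  split_ifs <;> first | (exfalso; order) | simp [this, le_add_of_nonneg_right]

theorem sum_mul_sum_ltPairs_le [CommSemiring R] [PartialOrder R] [IsOrderedRing R]
    {y : α → α → R} {a b : α → R} (hy : ∀ i ∈ s, ∀ j ∈ s, 0 ≤ y i j)
    (hrow : ∀ i ∈ s, ∑ j ∈ s, y i j = a i) (hcol : ∀ j ∈ s, ∑ i ∈ s, y i j = b j)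
    {w : α → R} (hw : ∀ t ∈ s, 0 ≤ w t) :
    (∑ t ∈ s, w t) * ∑ p ∈ ltPairs s, y p.1 p.2
      ≤ ∑ p ∈ ltPairs s, (a p.1 * w p.2 + w p.1 * b p.2) := by
  calc (∑ t ∈ s, w t) * ∑ p ∈ ltPairs s, y p.1 p.2
      ≤ ∑ t ∈ s, w t * (∑ i ∈ s with i < t, a i + ∑ j ∈ s with t < j, b j) := by
        rw [sum_mul]
        exact sum_le_sum fun t ht => mul_le_mul_of_nonneg_left
          (sum_ltPairs_le_sum_lt_add_sum_gt s hy hrow hcol t) (hw t ht)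
    _ = ∑ p ∈ ltPairs s, (a p.1 * w p.2 + w p.1 * b p.2) := by
        rw [sum_add_distrib, sum_ltPairs s fun i j => a i * w j, sum_ltPairs s fun i j => w i * b j]
        simp only [mul_add, sum_add_distrib, sum_filter, mul_sum, mul_ite, mul_zero]
        rw [sum_comm (s := s) (t := s) (f := fun t i => if i < t then w t * a i else 0)]
        simp only [mul_comm (w _) (a _)]

theorem half_mul_sum_ltPairs_le_sum_ltPairs_mul {K : Type*} [Field K] [LinearOrder K]
    [IsStrictOrderedRing K] {y : α → α → K} {a b : α → K} (ha : ∀ i ∈ s, 0 ≤ a i)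
    (ha1 : ∑ i ∈ s, a i = 1) (hy : ∀ i ∈ s, ∀ j ∈ s, 0 ≤ y i j)
    (hrow : ∀ i ∈ s, ∑ j ∈ s, y i j = a i) (hcol : ∀ j ∈ s, ∑ i ∈ s, y i j = b j) :
    1 / 2 * ∑ p ∈ ltPairs s, y p.1 p.2
      ≤ ∑ p ∈ ltPairs s, (1 / (2 * #s) + a p.1 / 2) * (1 / (2 * #s) + b p.2 / 2) := by
  have hn : (0 : K) < #s := by
    exact_mod_cast card_pos.2 (nonempty_of_sum_ne_zero (ha1 ▸ one_ne_zero))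
  have hnc : 2 * #s * (1 / (2 * #s)) = (1 : K) := by field_simp
  have hN : (2 * #(ltPairs s) + #s : K) = #s ^ 2 := by
    exact_mod_cast two_mul_card_ltPairs_add_card s
  set n : K := (#s : K)
  set c : K := 1 / (2 * n)
  set F := ∑ p ∈ ltPairs s, y p.1 p.2
  set Q := ∑ p ∈ ltPairs s, a p.1 * a p.2
  have hUV := sum_mul_sum_ltPairs_le s hy hrow hcol (w := fun _ => 1) (fun _ _ => zero_le_one)
  have hQW := sum_mul_sum_ltPairs_le s hy hrow hcol ha
  have hQ := two_mul_card_mul_sum_ltPairs_mul_le s a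
  simp only [sum_const, nsmul_eq_mul, mul_one, ha1, one_mul, one_pow] at hUV hQW hQ
  -- `a i a j` is added and subtracted so that the weighted average `hQW` applies.
  have hexpand : ∀ p : α × α, (c + a p.1 / 2) * (c + b p.2 / 2)
      = c ^ 2 + c / 2 * (a p.1 + b p.2) + 1 / 4 * (a p.1 * a p.2 + a p.1 * b p.2)
        - 1 / 4 * (a p.1 * a p.2) := fun p => by ring
  rw [sum_congr rfl fun p _ => hexpand p, sum_sub_distrib, sum_add_distrib, sum_add_distrib,
    ← mul_sum, ← mul_sum, ← mul_sum, sum_const, nsmul_eq_mul]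
  have hNc : #(ltPairs s) * c ^ 2 = 1 / 8 - c / 4 := by
    linear_combination c ^ 2 / 2 * hN + ((2 * n * c + 1) / 8 - c / 4) * hnc
  have hQc : Q ≤ 1 / 2 - c :=
    calc Q = c * (2 * n * Q) := by linear_combination (-Q) * hnc
      _ ≤ c * (n - 1) := mul_le_mul_of_nonneg_left hQ (by positivity)
      _ = 1 / 2 - c := by linear_combination (1 / 2) * hnc
  have hFc : F / 4 ≤ c / 2 * ∑ p ∈ ltPairs s, (a p.1 + b p.2) :=
    calc F / 4 = c / 2 * (n * F) := by linear_combination (-F / 4) * hnc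
      _ ≤ _ := mul_le_mul_of_nonneg_left hUV (by positivity)
  linarith

end LtPairs

theorem stmt_2_general (k : ℕ) (xu xv : ℕ → ℝ) (y : ℕ → ℕ → ℝ)
    (hxu0 : ∀ i ∈ Icc 1 k, 0 ≤ xu i)
    (hxu1 : ∑ i ∈ Icc 1 k, xu i = 1)
    (hy0 : ∀ i ∈ Icc 1 k, ∀ j ∈ Icc 1 k, 0 ≤ y i j)
    (hrow : ∀ i ∈ Icc 1 k, ∑ j ∈ Icc 1 k, y i j = xu i)
    (hcol : ∀ j ∈ Icc 1 k, ∑ i ∈ Icc 1 k, y i j = xv j) :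
    ∑ p ∈ (Icc 1 k ×ˢ Icc 1 k).filter (fun p => p.1 < p.2),
        (1 / (2 * (k : ℝ)) + xu p.1 / 2) * (1 / (2 * (k : ℝ)) + xv p.2 / 2)
      ≥ (1 / 2) * ∑ p ∈ (Icc 1 k ×ˢ Icc 1 k).filter (fun p => p.1 < p.2), y p.1 p.2 := by
  have h := half_mul_sum_ltPairs_le_sum_ltPairs_mul (Icc 1 k) hxu0 hxu1 hy0 hrow hcol
  rwa [Nat.card_Icc, add_tsub_cancel_right] at h

/-- Single-edge LP rounding inequality for Max-k-Ordering: if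
`xu, xv` are probability vectors on `[k]` and `y` is a nonnegative matrix with row
sums `xu` and column sums `xv`, then
`∑_{i<j} (1/(2k) + xu i / 2)(1/(2k) + xv j / 2) ≥ (1/2) ∑_{i<j} y i j`. -/
theorem stmt_2 (k : ℕ) (hk : 2 ≤ k) (xu xv : ℕ → ℝ) (y : ℕ → ℕ → ℝ)
    (hxu0 : ∀ i ∈ Icc 1 k, 0 ≤ xu i) (hxv0 : ∀ i ∈ Icc 1 k, 0 ≤ xv i)
    (hxu1 : ∑ i ∈ Icc 1 k, xu i = 1) (hxv1 : ∑ i ∈ Icc 1 k, xv i = 1)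
    (hy0 : ∀ i ∈ Icc 1 k, ∀ j ∈ Icc 1 k, 0 ≤ y i j)
    (hrow : ∀ i ∈ Icc 1 k, ∑ j ∈ Icc 1 k, y i j = xu i)
    (hcol : ∀ j ∈ Icc 1 k, ∑ i ∈ Icc 1 k, y i j = xv j) :
    ∑ p ∈ (Icc 1 k ×ˢ Icc 1 k).filter (fun p => p.1 < p.2),
        (1 / (2 * (k : ℝ)) + xu p.1 / 2) * (1 / (2 * (k : ℝ)) + xv p.2 / 2)
      ≥ (1 / 2) * ∑ p ∈ (Icc 1 k ×ˢ Icc 1 k).filter (fun p => p.1 < p.2), y p.1 p.2 :=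
  stmt_2_general k xu xv y hxu0 hxu1 hy0 hrow hcol
end

section
/- Let k ≥ 2 be an integer, let y : [k] × [k] → ℝ be nonnegative, and define x^u_i = Σ_{j∈[k]} y_{ij} and x^v_j = Σ_{i∈[k]} y_{ij}. Then Σ_{i,j∈[k], i<j} (x^u_i + x^v_j) ≥ k · Σ_{i,j∈[k], i<j} y_{ij}. -/
/-!
Summing `xu i` over the pairs `i < j` counts row `i` once for every `j > i`, and summing `xv j`
counts column `j` once for every `i < j`; so the left side is `∑ i, ∑ j, (aᵢ + bⱼ) • y i j` with
`aᵢ = #{j > i}` and `bⱼ = #{i < j}`. When `i < j` every index is either above `i` or below `j`,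
so `aᵢ + bⱼ ≥ k`, and the remaining terms are nonnegative.
-/

open Finset

namespace Finset

variable {α : Type*} [LinearOrder α]

theorem card_le_card_filter_gt_add_card_filter_lt (s : Finset α) {i j : α} (hij : i < j) :
    #s ≤ #(s.filter (i < ·)) + #(s.filter (· < j)) := by
  refine (card_le_card fun e he => ?_).trans (card_union_le _ _)
  rcases lt_or_ge i e with hie | hei
  · exact mem_union_left _ (mem_filter.2 ⟨he, hie⟩)
  · exact mem_union_right _ (mem_filter.2 ⟨he, hei.trans_lt hij⟩)

variable {M : Type*} [AddCommMonoid M]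

theorem sum_filter_fst_lt_snd_comp_fst (s : Finset α) (f : α → M) :
    ∑ p ∈ (s ×ˢ s).filter (fun p => p.1 < p.2), f p.1 = ∑ i ∈ s, #(s.filter (i < ·)) • f i := by
  rw [sum_filter, sum_product]
  exact sum_congr rfl fun i _ => by rw [← sum_filter]; exact sum_const (f _)

theorem sum_filter_fst_lt_snd_comp_snd (s : Finset α) (f : α → M) :
    ∑ p ∈ (s ×ˢ s).filter (fun p => p.1 < p.2), f p.2 = ∑ j ∈ s, #(s.filter (· < j)) • f j := by
  rw [sum_filter, sum_product_right]
  exact sum_congr rfl fun j _ => by rw [← sum_filter]; exact sum_const (f _)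

theorem card_smul_sum_upper_le_sum_row_add_col [PartialOrder M] [IsOrderedAddMonoid M]
    (s : Finset α) (y : α → α → M) (hy : ∀ i ∈ s, ∀ j ∈ s, 0 ≤ y i j) :
    #s • ∑ p ∈ (s ×ˢ s).filter (fun p => p.1 < p.2), y p.1 p.2
      ≤ ∑ p ∈ (s ×ˢ s).filter (fun p => p.1 < p.2),
          ((∑ j ∈ s, y p.1 j) + (∑ i ∈ s, y i p.2)) := by
  set c : α × α → ℕ := fun p => #(s.filter (p.1 < ·)) + #(s.filter (· < p.2))
  have h_rhs : ∑ p ∈ (s ×ˢ s).filter (fun p => p.1 < p.2),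
      ((∑ j ∈ s, y p.1 j) + (∑ i ∈ s, y i p.2)) = ∑ p ∈ s ×ˢ s, c p • y p.1 p.2 := by
    rw [sum_add_distrib, sum_filter_fst_lt_snd_comp_fst s (fun i => ∑ j ∈ s, y i j),
      sum_filter_fst_lt_snd_comp_snd s (fun j => ∑ i ∈ s, y i j), sum_product]
    simp only [c, smul_sum, add_smul, sum_add_distrib]
    rw [sum_comm (s := s) (t := s) (f := fun j i => #(s.filter (· < j)) • y i j)]
  calc #s • ∑ p ∈ (s ×ˢ s).filter (fun p => p.1 < p.2), y p.1 p.2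
      ≤ ∑ p ∈ (s ×ˢ s).filter (fun p => p.1 < p.2), c p • y p.1 p.2 := by
        rw [smul_sum]
        refine sum_le_sum fun p hp => ?_
        obtain ⟨hp, hlt⟩ := mem_filter.1 hp
        exact nsmul_le_nsmul_left (hy _ (mem_product.1 hp).1 _ (mem_product.1 hp).2)
          (card_le_card_filter_gt_add_card_filter_lt s hlt)
    _ ≤ ∑ p ∈ s ×ˢ s, c p • y p.1 p.2 :=
        sum_le_sum_of_subset_of_nonneg (filter_subset _ _) fun p hp _ =>
          nsmul_nonneg (hy _ (mem_product.1 hp).1 _ (mem_product.1 hp).2) _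
    _ = _ := h_rhs.symm

end Finset

theorem stmt_3_general (k : ℕ) (y : ℕ → ℕ → ℝ)
    (hy0 : ∀ i ∈ Icc 1 k, ∀ j ∈ Icc 1 k, 0 ≤ y i j) :
    ∑ p ∈ (Icc 1 k ×ˢ Icc 1 k).filter (fun p => p.1 < p.2),
        ((∑ j ∈ Icc 1 k, y p.1 j) + (∑ i ∈ Icc 1 k, y i p.2))
      ≥ (k : ℝ) * ∑ p ∈ (Icc 1 k ×ˢ Icc 1 k).filter (fun p => p.1 < p.2), y p.1 p.2 := by
  have h := card_smul_sum_upper_le_sum_row_add_col (Icc 1 k) y hy0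
  rwa [Nat.card_Icc, Nat.add_sub_cancel, nsmul_eq_mul] at h

/-- Let `k ≥ 2`, `y : [k]×[k] → ℝ` nonnegative, `xu i = ∑ j, y i j`
and `xv j = ∑ i, y i j`. Then `∑_{i<j} (xu i + xv j) ≥ k ∑_{i<j} y i j`. -/
theorem stmt_3 (k : ℕ) (hk : 2 ≤ k) (y : ℕ → ℕ → ℝ)
    (hy0 : ∀ i ∈ Icc 1 k, ∀ j ∈ Icc 1 k, 0 ≤ y i j) :
    ∑ p ∈ (Icc 1 k ×ˢ Icc 1 k).filter (fun p => p.1 < p.2),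
        ((∑ j ∈ Icc 1 k, y p.1 j) + (∑ i ∈ Icc 1 k, y i p.2))
      ≥ (k : ℝ) * ∑ p ∈ (Icc 1 k ×ˢ Icc 1 k).filter (fun p => p.1 < p.2), y p.1 p.2 :=
  stmt_3_general k y hy0
end

section
/- Let N ≥ 2 and o be integers with 1 ≤ o ≤ N−1. Let S_u, S_v ⊆ [N] be nonempty sets with min(S_u) + o ≤ max(S_v). Let y : [N] × [N] → ℝ be nonnegative with y_{ij} = 0 whenever i ∉ S_u or j ∉ S_v, and with Σ_{i,j∈[N]} y_{ij} = 1. Define x^u_i = Σ_{j∈[N]} y_{ij}, x^v_j = Σ_{i∈[N]} y_{ij}, and the probabilities p_u(i) = x^u_i/2 + (1/4)·(𝟙[i = min(S_u)] + 𝟙[i = max(S_u)]) and p_v(j) = x^v_j/2 + (1/4)·(𝟙[j = min(S_v)] + 𝟙[j = max(S_v)]). Then Σ_{i,j∈[N], i+o≤j} p_u(i) · p_v(j) ≥ (1/4)·(1 + 1/√2) · Σ_{i,j∈[N], i+o≤j} y_{ij}. -/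
/-!
Let `A` be the `y`-mass of the pairs with `i + o ≤ j`, and `xᵤ`, `xᵥ` the marginals of `y`. Keeping
only the indicator of `min Su` in `p_u` and of `max Sv` in `p_v`, the left side is at least
`Σ_{i+o≤j} xᵤ(i) xᵥ(j) / 4 + Σ_{i+o≤max Sv} xᵤ(i) / 8 + Σ_{min Su+o≤j} xᵥ(j) / 8 + 1/16`.
Since `y` lives on `Su × Sv`, both middle sums dominate `A`. The relation `i + o ≤ j` is Ferrers:
for two satisfied pairs `(i, j)`, `(i', j')` one of the crossed pairs `(i, j')`, `(i', j)` is
satisfied, so summing `y i j * y i' j'` over both crossings shows that the product term is at least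
`A² / 8`. Finally `A²/8 + A/4 + 1/16 - (1 + 1/√2) A / 4 = (A - 1/√2)² / 8`.
-/

open Finset

def IsFerrersRel {α β : Type*} (R : α → β → Prop) : Prop :=
  ∀ ⦃a b c d⦄, R a b → R c d → R a d ∨ R c b

lemma isFerrersRel_add_le (o : ℕ) : IsFerrersRel fun i j : ℕ => i + o ≤ j := by
  intro a b c d _ _
  omega

lemma sum_filter_le_sum_filter_of_imp {ι : Type*} {T : Finset ι} {P Q : ι → Prop}
    [DecidablePred P] [DecidablePred Q] {f : ι → ℝ} (hf : ∀ x ∈ T, 0 ≤ f x)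
    (hPQ : ∀ x ∈ T, f x ≠ 0 → P x → Q x) :
    ∑ x ∈ T with P x, f x ≤ ∑ x ∈ T with Q x, f x := by
  rw [sum_filter, sum_filter]
  refine sum_le_sum fun x hx => ?_
  by_cases h0 : f x = 0
  · simp [h0]
  by_cases hP : P x
  · rw [if_pos hP, if_pos (hPQ x hx h0 hP)]
  · rw [if_neg hP]
    split_ifs
    exacts [hf x hx, le_rfl]

lemma quarter_one_add_inv_sqrt_two_mul_le (A : ℝ) :
    1 / 4 * (1 + 1 / √2) * A ≤ A ^ 2 / 8 + A / 4 + 1 / 16 := by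
  have h : (1 / √2) ^ 2 = 1 / 2 := by rw [div_pow, Real.sq_sqrt zero_le_two, one_pow]
  nlinarith [sq_nonneg (A - 1 / √2)]

section

variable {α β : Type*} {s : Finset α} {t : Finset β} {R : α → β → Prop} [DecidableRel R]
  {y : α → β → ℝ}

lemma sum_filter_mul_ite_eq_snd [DecidableEq β] (f : α → ℝ) {d : β} (hd : d ∈ t) :
    ∑ p ∈ s ×ˢ t with R p.1 p.2, f p.1 * (if p.2 = d then 1 else 0) = ∑ i ∈ s with R i d, f i := by
  rw [sum_filter, sum_filter, sum_product]
  refine sum_congr rfl fun i _ => ?_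
  rw [sum_eq_single_of_mem d hd fun j _ hj => by simp [hj]]
  simp

lemma sum_filter_ite_mul_eq_fst [DecidableEq α] (g : β → ℝ) {a : α} (ha : a ∈ s) :
    ∑ p ∈ s ×ˢ t with R p.1 p.2, (if p.1 = a then 1 else 0) * g p.2 = ∑ j ∈ t with R a j, g j := by
  rw [sum_filter, sum_filter, sum_product_right]
  refine sum_congr rfl fun j _ => ?_
  rw [sum_eq_single_of_mem a ha fun i _ hi => by simp [hi]]
  simp

lemma sum_filter_marginal_mul_marginal_eq :
    ∑ p ∈ s ×ˢ t with R p.1 p.2, (∑ j ∈ t, y p.1 j) * ∑ i ∈ s, y i p.2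
      = ∑ p ∈ s ×ˢ t, ∑ q ∈ s ×ˢ t, if R p.1 q.2 then y p.1 p.2 * y q.1 q.2 else 0 := by
  simp only [sum_filter, sum_product, sum_mul_sum]
  refine sum_congr rfl fun i _ => ?_
  rw [sum_comm_cycle]
  refine sum_congr rfl fun j _ => ?_
  split_ifs <;> simp only [sum_const_zero]

lemma IsFerrersRel.sq_sum_filter_le (hR : IsFerrersRel R) (hy : ∀ i ∈ s, ∀ j ∈ t, 0 ≤ y i j) :
    (∑ p ∈ s ×ˢ t with R p.1 p.2, y p.1 p.2) ^ 2
      ≤ 2 * ∑ p ∈ s ×ˢ t with R p.1 p.2, (∑ j ∈ t, y p.1 j) * ∑ i ∈ s, y i p.2 := by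
  set c : α × β → α × β → ℝ := fun p q => if R p.1 q.2 then y p.1 p.2 * y q.1 q.2 else 0
  have hcover : ∀ p ∈ s ×ˢ t, ∀ q ∈ s ×ˢ t,
      (if R p.1 p.2 then y p.1 p.2 else 0) * (if R q.1 q.2 then y q.1 q.2 else 0)
        ≤ c p q + c q p := by
    intro p hp q hq
    rw [mem_product] at hp hq
    have hpq := mul_nonneg (hy _ hp.1 _ hp.2) (hy _ hq.1 _ hq.2)
    have hqp := mul_nonneg (hy _ hq.1 _ hq.2) (hy _ hp.1 _ hp.2)
    simp only [c]
    by_cases hRp : R p.1 p.2 <;> by_cases hRq : R q.1 q.2 <;>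
      simp only [hRp, hRq, if_true, if_false, zero_mul, mul_zero]
    · rcases hR hRp hRq with h | h <;> split_ifs <;> linarith
    all_goals split_ifs <;> linarith
  calc (∑ p ∈ s ×ˢ t with R p.1 p.2, y p.1 p.2) ^ 2
      = ∑ p ∈ s ×ˢ t, ∑ q ∈ s ×ˢ t,
          (if R p.1 p.2 then y p.1 p.2 else 0) * (if R q.1 q.2 then y q.1 q.2 else 0) := by
        rw [sq, sum_filter, sum_mul_sum]
    _ ≤ ∑ p ∈ s ×ˢ t, ∑ q ∈ s ×ˢ t, (c p q + c q p) :=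
        sum_le_sum fun p hp => sum_le_sum fun q hq => hcover p hp q hq
    _ = 2 * ∑ p ∈ s ×ˢ t with R p.1 p.2, (∑ j ∈ t, y p.1 j) * ∑ i ∈ s, y i p.2 := by
        rw [sum_filter_marginal_mul_marginal_eq]
        simp only [sum_add_distrib]
        rw [sum_comm (f := fun p q => c q p)]
        ring

theorem IsFerrersRel.sq_div_eight_add_le_sum_filter_rounding [DecidableEq α] [DecidableEq β]
    (hR : IsFerrersRel R) (hy : ∀ i ∈ s, ∀ j ∈ t, 0 ≤ y i j) {a : α} {d : β} (ha : a ∈ s)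
    (hd : d ∈ t) (had : R a d) (hrow : ∀ i ∈ s, ∀ j ∈ t, y i j ≠ 0 → R i j → R i d)
    (hcol : ∀ i ∈ s, ∀ j ∈ t, y i j ≠ 0 → R i j → R a j) :
    (∑ p ∈ s ×ˢ t with R p.1 p.2, y p.1 p.2) ^ 2 / 8
        + (∑ p ∈ s ×ˢ t with R p.1 p.2, y p.1 p.2) / 4 + 1 / 16
      ≤ ∑ p ∈ s ×ˢ t with R p.1 p.2,
          ((∑ j ∈ t, y p.1 j) / 2 + 1 / 4 * (if p.1 = a then 1 else 0))
            * ((∑ i ∈ s, y i p.2) / 2 + 1 / 4 * (if p.2 = d then 1 else 0)) := by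
  have hy' : ∀ p ∈ s ×ˢ t, 0 ≤ y p.1 p.2 := fun p hp =>
    hy _ (mem_product.1 hp).1 _ (mem_product.1 hp).2
  have hrows : ∑ p ∈ s ×ˢ t with R p.1 p.2, y p.1 p.2 ≤ ∑ i ∈ s with R i d, ∑ j ∈ t, y i j := by
    rw [← sum_product', ← filter_product_left]
    exact sum_filter_le_sum_filter_of_imp hy' fun p hp =>
      hrow _ (mem_product.1 hp).1 _ (mem_product.1 hp).2
  have hcols : ∑ p ∈ s ×ˢ t with R p.1 p.2, y p.1 p.2 ≤ ∑ j ∈ t with R a j, ∑ i ∈ s, y i j := by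
    rw [← sum_product_right', ← filter_product_right]
    exact sum_filter_le_sum_filter_of_imp hy' fun p hp =>
      hcol _ (mem_product.1 hp).1 _ (mem_product.1 hp).2
  have hcorner : ∑ p ∈ s ×ˢ t with R p.1 p.2,
      (if p.1 = a then (1 : ℝ) else 0) * (if p.2 = d then 1 else 0) = 1 := by
    refine (sum_filter_mul_ite_eq_snd (fun i => if i = a then 1 else 0) hd).trans ?_
    rw [sum_ite_eq', if_pos (mem_filter.2 ⟨ha, had⟩)]
  have hexpand : ∀ X Y I J : ℝ,
      (X / 2 + 1 / 4 * I) * (Y / 2 + 1 / 4 * J) = X * Y / 4 + X * J / 8 + I * Y / 8 + I * J / 16 :=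
    fun _ _ _ _ => by ring
  have hrow_sum := sum_filter_mul_ite_eq_snd (R := R) (s := s) (fun i => ∑ j ∈ t, y i j) hd
  have hcol_sum := sum_filter_ite_mul_eq_fst (R := R) (t := t) (fun j => ∑ i ∈ s, y i j) ha
  simp only [hexpand, sum_add_distrib, ← sum_div, hcorner, hrow_sum, hcol_sum]
  linarith [hR.sq_sum_filter_le hy]

end

theorem stmt_4_general (N o : ℕ)
    (Su Sv : Finset ℕ) (hSu : Su ⊆ Icc 1 N) (hSv : Sv ⊆ Icc 1 N)
    (hSune : Su.Nonempty) (hSvne : Sv.Nonempty)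
    (hminmax : Su.min' hSune + o ≤ Sv.max' hSvne)
    (y : ℕ → ℕ → ℝ)
    (hy0 : ∀ i ∈ Icc 1 N, ∀ j ∈ Icc 1 N, 0 ≤ y i j)
    (hsupp : ∀ i ∈ Icc 1 N, ∀ j ∈ Icc 1 N, (i ∉ Su ∨ j ∉ Sv) → y i j = 0) :
    ∑ p ∈ (Icc 1 N ×ˢ Icc 1 N).filter (fun p => p.1 + o ≤ p.2),
        ((∑ j ∈ Icc 1 N, y p.1 j) / 2
            + (1 / 4) * ((if p.1 = Su.min' hSune then (1 : ℝ) else 0)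
              + (if p.1 = Su.max' hSune then (1 : ℝ) else 0)))
        * ((∑ i ∈ Icc 1 N, y i p.2) / 2
            + (1 / 4) * ((if p.2 = Sv.min' hSvne then (1 : ℝ) else 0)
              + (if p.2 = Sv.max' hSvne then (1 : ℝ) else 0)))
      ≥ (1 / 4) * (1 + 1 / Real.sqrt 2) *
        ∑ p ∈ (Icc 1 N ×ˢ Icc 1 N).filter (fun p => p.1 + o ≤ p.2), y p.1 p.2 := by
  have hmem : ∀ i ∈ Icc 1 N, ∀ j ∈ Icc 1 N, y i j ≠ 0 → i ∈ Su ∧ j ∈ Sv :=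
    fun i hi j hj hy => by_contra fun h => hy (hsupp i hi j hj (not_and_or.1 h))
  have hrow : ∀ i ∈ Icc 1 N, ∀ j ∈ Icc 1 N, y i j ≠ 0 → i + o ≤ j → i + o ≤ Sv.max' hSvne :=
    fun i hi j hj hy hij => hij.trans (Sv.le_max' j (hmem i hi j hj hy).2)
  have hcol : ∀ i ∈ Icc 1 N, ∀ j ∈ Icc 1 N, y i j ≠ 0 → i + o ≤ j → Su.min' hSune + o ≤ j :=
    fun i hi j hj hy hij => le_trans (by grw [Su.min'_le i (hmem i hi j hj hy).1]) hij
  refine (quarter_one_add_inv_sqrt_two_mul_le _).trans <|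
    ((isFerrersRel_add_le o).sq_div_eight_add_le_sum_filter_rounding hy0 (hSu (Su.min'_mem hSune))
      (hSv (Sv.max'_mem hSvne)) hminmax hrow hcol).trans <| sum_le_sum fun p hp => ?_
  obtain ⟨hp1, hp2⟩ := mem_product.1 (mem_filter.1 hp).1
  have hX : 0 ≤ ∑ j ∈ Icc 1 N, y p.1 j := sum_nonneg fun j hj => hy0 _ hp1 _ hj
  have hY : 0 ≤ ∑ i ∈ Icc 1 N, y i p.2 := sum_nonneg fun i hi => hy0 _ hi _ hp2
  gcongr
  · exact le_add_of_nonneg_right (by positivity)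
  · exact le_add_of_nonneg_left (by positivity)

/-- Single-edge rounding inequality for OffsetRMAS: with offset
`1 ≤ o ≤ N−1`, label sets `Su, Sv ⊆ [N]` with `min Su + o ≤ max Sv`, and a nonnegative
LP matrix `y` supported on `Su × Sv` summing to `1`, the rounding probabilities
`p_u(i) = xu i / 2 + (1/4)(𝟙[i = min Su] + 𝟙[i = max Su])` (similarly `p_v`) satisfy
`∑_{i+o≤j} p_u(i) p_v(j) ≥ (1/4)(1 + 1/√2) ∑_{i+o≤j} y i j`. -/
theorem stmt_4 (N o : ℕ) (hN : 2 ≤ N) (ho1 : 1 ≤ o) (hoN : o + 1 ≤ N)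
    (Su Sv : Finset ℕ) (hSu : Su ⊆ Icc 1 N) (hSv : Sv ⊆ Icc 1 N)
    (hSune : Su.Nonempty) (hSvne : Sv.Nonempty)
    (hminmax : Su.min' hSune + o ≤ Sv.max' hSvne)
    (y : ℕ → ℕ → ℝ)
    (hy0 : ∀ i ∈ Icc 1 N, ∀ j ∈ Icc 1 N, 0 ≤ y i j)
    (hsupp : ∀ i ∈ Icc 1 N, ∀ j ∈ Icc 1 N, (i ∉ Su ∨ j ∉ Sv) → y i j = 0)
    (hsum : ∑ p ∈ Icc 1 N ×ˢ Icc 1 N, y p.1 p.2 = 1) :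
    ∑ p ∈ (Icc 1 N ×ˢ Icc 1 N).filter (fun p => p.1 + o ≤ p.2),
        ((∑ j ∈ Icc 1 N, y p.1 j) / 2
            + (1 / 4) * ((if p.1 = Su.min' hSune then (1 : ℝ) else 0)
              + (if p.1 = Su.max' hSune then (1 : ℝ) else 0)))
        * ((∑ i ∈ Icc 1 N, y i p.2) / 2
            + (1 / 4) * ((if p.2 = Sv.min' hSvne then (1 : ℝ) else 0)
              + (if p.2 = Sv.max' hSvne then (1 : ℝ) else 0)))
      ≥ (1 / 4) * (1 + 1 / Real.sqrt 2) *
        ∑ p ∈ (Icc 1 N ×ˢ Icc 1 N).filter (fun p => p.1 + o ≤ p.2), y p.1 p.2 :=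
  stmt_4_general N o Su Sv hSu hSv hSune hSvne hminmax y hy0 hsupp
end

section
/- Let N ≥ 2 and o be integers with 1 ≤ o ≤ N−1, let S_u, S_v ⊆ [N] be nonempty, and let y : [N] × [N] → ℝ be nonnegative with y_{ij} = 0 whenever i ∉ S_u or j ∉ S_v. Define x^u_i = Σ_{j∈[N]} y_{ij}, x^v_j = Σ_{i∈[N]} y_{ij}, and z = Σ_{i,j∈[N], i+o≤j} y_{ij}. Then Σ_{i∈[N], i ≤ max(S_v) − o} x^u_i + Σ_{j∈[N], j ≥ min(S_u) + o} x^v_j ≥ 2z. -/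
open Finset

/-
Every pair `(i, j)` with `i + o ≤ j` and `y i j ≠ 0` has `j ∈ Sv` and `i ∈ Su`, hence
`i + o ≤ max Sv` and `min Su + o ≤ j`. So `z` is bounded both by the mass of the rows
`i ≤ max Sv - o` and by the mass of the columns `j ≥ min Su + o`; adding the two bounds gives `2z`.
-/

theorem Finset.sum_le_sum_of_ne_zero_of_nonneg {ι M : Type*} [AddCommMonoid M] [PartialOrder M]
    [IsOrderedAddMonoid M] {s t : Finset ι} {f : ι → M}
    (h : ∀ x ∈ s, f x ≠ 0 → x ∈ t) (hf : ∀ x ∈ t, 0 ≤ f x) :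
    ∑ x ∈ s, f x ≤ ∑ x ∈ t, f x := by
  classical
  rw [← sum_filter_ne_zero]
  exact sum_le_sum_of_subset_of_nonneg (fun x hx => h x (mem_filter.1 hx).1 (mem_filter.1 hx).2)
    fun x hx _ => hf x hx

section UpperTriangle

variable {s : Finset ℕ} {o : ℕ} {y : ℕ → ℕ → ℝ}

theorem sum_upper_le_sum_rows {Sv : Finset ℕ} (hSv : Sv.Nonempty)
    (hy0 : ∀ i ∈ s, ∀ j ∈ s, 0 ≤ y i j) (hsupp : ∀ i ∈ s, ∀ j ∈ s, y i j ≠ 0 → j ∈ Sv) :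
    ∑ p ∈ (s ×ˢ s).filter (fun p => p.1 + o ≤ p.2), y p.1 p.2
      ≤ ∑ i ∈ s.filter (fun i => i + o ≤ Sv.max' hSv), ∑ j ∈ s, y i j := by
  rw [← sum_product']
  refine sum_le_sum_of_ne_zero_of_nonneg (fun p hp hy => ?_)
    fun p hp => hy0 _ (mem_filter.1 (mem_product.1 hp).1).1 _ (mem_product.1 hp).2
  obtain ⟨⟨hi, hj⟩, hij⟩ := by simpa only [mem_filter, mem_product] using hp
  exact mem_product.2 ⟨mem_filter.2 ⟨hi, hij.trans (Sv.le_max' _ (hsupp _ hi _ hj hy))⟩, hj⟩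

theorem sum_upper_le_sum_cols {Su : Finset ℕ} (hSu : Su.Nonempty)
    (hy0 : ∀ i ∈ s, ∀ j ∈ s, 0 ≤ y i j) (hsupp : ∀ i ∈ s, ∀ j ∈ s, y i j ≠ 0 → i ∈ Su) :
    ∑ p ∈ (s ×ˢ s).filter (fun p => p.1 + o ≤ p.2), y p.1 p.2
      ≤ ∑ j ∈ s.filter (fun j => Su.min' hSu + o ≤ j), ∑ i ∈ s, y i j := by
  rw [← sum_product_right']
  refine sum_le_sum_of_ne_zero_of_nonneg (fun p hp hy => ?_)
    fun p hp => hy0 _ (mem_product.1 hp).1 _ (mem_filter.1 (mem_product.1 hp).2).1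
  obtain ⟨⟨hi, hj⟩, hij⟩ := by simpa only [mem_filter, mem_product] using hp
  exact mem_product.2
    ⟨hi, mem_filter.2 ⟨hj, (Nat.add_le_add_right (Su.min'_le _ (hsupp _ hi _ hj hy)) o).trans hij⟩⟩

end UpperTriangle

theorem stmt_13_general (N o : ℕ)
    (Su Sv : Finset ℕ)
    (hSune : Su.Nonempty) (hSvne : Sv.Nonempty)
    (y : ℕ → ℕ → ℝ)
    (hy0 : ∀ i ∈ Icc 1 N, ∀ j ∈ Icc 1 N, 0 ≤ y i j)
    (hsupp : ∀ i ∈ Icc 1 N, ∀ j ∈ Icc 1 N, (i ∉ Su ∨ j ∉ Sv) → y i j = 0) :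
    ∑ i ∈ (Icc 1 N).filter (fun i => i + o ≤ Sv.max' hSvne), (∑ j ∈ Icc 1 N, y i j)
      + ∑ j ∈ (Icc 1 N).filter (fun j => Su.min' hSune + o ≤ j), (∑ i ∈ Icc 1 N, y i j)
      ≥ 2 * ∑ p ∈ (Icc 1 N ×ˢ Icc 1 N).filter (fun p => p.1 + o ≤ p.2), y p.1 p.2 := by
  have hmem : ∀ i ∈ Icc 1 N, ∀ j ∈ Icc 1 N, y i j ≠ 0 → i ∈ Su ∧ j ∈ Sv := fun i hi j hj hy => by
    by_contra h
    exact hy (hsupp i hi j hj (not_and_or.1 h))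
  have hrows := sum_upper_le_sum_rows (o := o) hSvne hy0 fun i hi j hj hy => (hmem i hi j hj hy).2
  have hcols := sum_upper_le_sum_cols (o := o) hSune hy0 fun i hi j hj hy => (hmem i hi j hj hy).1
  linarith

/-- Let `1 ≤ o ≤ N−1`, let `Su, Sv ⊆ [N]` be nonempty, and let
`y : [N]×[N] → ℝ` be nonnegative and supported on `Su × Sv`. With marginals
`xu i = ∑ j, y i j`, `xv j = ∑ i, y i j` and `z = ∑_{i+o≤j} y i j`, we have
`∑_{i ≤ max Sv − o} xu i + ∑_{j ≥ min Su + o} xv j ≥ 2z`. -/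
theorem stmt_13 (N o : ℕ) (hN : 2 ≤ N) (ho1 : 1 ≤ o) (hoN : o + 1 ≤ N)
    (Su Sv : Finset ℕ) (hSu : Su ⊆ Icc 1 N) (hSv : Sv ⊆ Icc 1 N)
    (hSune : Su.Nonempty) (hSvne : Sv.Nonempty)
    (y : ℕ → ℕ → ℝ)
    (hy0 : ∀ i ∈ Icc 1 N, ∀ j ∈ Icc 1 N, 0 ≤ y i j)
    (hsupp : ∀ i ∈ Icc 1 N, ∀ j ∈ Icc 1 N, (i ∉ Su ∨ j ∉ Sv) → y i j = 0) :
    ∑ i ∈ (Icc 1 N).filter (fun i => i + o ≤ Sv.max' hSvne), (∑ j ∈ Icc 1 N, y i j)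
      + ∑ j ∈ (Icc 1 N).filter (fun j => Su.min' hSune + o ≤ j), (∑ i ∈ Icc 1 N, y i j)
      ≥ 2 * ∑ p ∈ (Icc 1 N ×ˢ Icc 1 N).filter (fun p => p.1 + o ≤ p.2), y p.1 p.2 :=
  stmt_13_general N o Su Sv hSune hSvne y hy0 hsupp
end

section
/- Let D = (V, A) be a finite digraph with a nonnegative weight function w : A → ℝ and let k ≥ 1 be an integer. Then the maximum over all labelings ℓ : V → [k] of Σ_{(u,v)∈A, ℓ(u)<ℓ(v)} w(u,v) equals the maximum of Σ_{e∈A'} w(e) over all subsets A' ⊆ A such that the digraph (V, A') contains no directed cycle and no directed path of length k. (Thus Max-k-Ordering is equivalent to finding the maximum weight subgraph that is acyclic and has no directed path of length k.) -/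
/-!
The edges satisfied by a labeling `ℓ : V → [k]` contain no directed cycle and no directed path
of length `k`, since labels grow by at least one along every edge. Conversely, if `A'` is
acyclic without directed paths of length `k`, labeling each vertex by one plus the length of a
longest directed path of `A'` ending at it satisfies all of `A'`: a longest path ending at `u`
can be extended by an edge `(u, v)`, as otherwise `v` lies on it and closes a cycle. Nonnegative weights then make the two suprema
dominate each other.
-/

open Finset

/-- `HasDiPath A k` : the digraph with edge relation `A` contains a directed path of
length `k` (with `k` edges, on `k+1` distinct vertices). -/
def HasDiPath {V : Type*} (A : V → V → Prop) (k : ℕ) : Prop :=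
  ∃ f : ℕ → V, (∀ i j, i ≤ k → j ≤ k → f i = f j → i = j) ∧
    ∀ i, i < k → A (f i) (f (i + 1))

/-- `HasDiCycle A` : the digraph with edge relation `A` contains a directed cycle. -/
def HasDiCycle {V : Type*} (A : V → V → Prop) : Prop :=
  ∃ m : ℕ, 1 ≤ m ∧ ∃ f : ℕ → V, (∀ i j, i < m → j < m → f i = f j → i = j) ∧
    f m = f 0 ∧ ∀ i, i < m → A (f i) (f (i + 1))

section Digraph

variable {V : Type*} {A : V → V → Prop}

def HasDiPathTo (A : V → V → Prop) (v : V) (m : ℕ) : Prop :=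
  ∃ f : ℕ → V, (∀ i j, i ≤ m → j ≤ m → f i = f j → i = j) ∧ f m = v ∧
    ∀ i, i < m → A (f i) (f (i + 1))

theorem hasDiPathTo_zero (v : V) : HasDiPathTo A v 0 :=
  ⟨fun _ => v, fun _ _ hi hj _ => by omega, rfl, fun _ hi => by omega⟩

theorem HasDiPathTo.lt_of_not_hasDiPath {v : V} {m k : ℕ} (h : HasDiPathTo A v m)
    (hp : ¬HasDiPath A k) : m < k := by
  obtain ⟨f, hinj, -, hedge⟩ := h
  by_contra! hkm
  exact hp ⟨f, fun i j hi hj => hinj i j (hi.trans hkm) (hj.trans hkm),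
    fun i hi => hedge i (hi.trans_le hkm)⟩

theorem hasDiCycle_of_walk {f : ℕ → V} {i n : ℕ} (hedge : ∀ j, j < n → A (f j) (f (j + 1)))
    (hinj : ∀ a b, a < n → b < n → f a = f b → a = b) (hi : i < n) (hfi : f i = f n) :
    HasDiCycle A := by
  refine ⟨n - i, by omega, fun j => f (i + j), fun a b ha hb hab => ?_, ?_,
    fun j hj => hedge (i + j) (by omega)⟩
  · have := hinj _ _ (by omega) (by omega) hab
    omega
  · simp only [Nat.add_sub_cancel' hi.le, Nat.add_zero, hfi]

theorem HasDiPathTo.snoc {u v : V} {m : ℕ} (hc : ¬HasDiCycle A) (h : HasDiPathTo A u m)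
    (huv : A u v) : HasDiPathTo A v (m + 1) := by
  obtain ⟨f, hinj, rfl, hedge⟩ := h
  set g : ℕ → V := fun j => if j ≤ m then f j else v
  have hgf : ∀ j, j ≤ m → g j = f j := fun j hj => if_pos hj
  have hgv : g (m + 1) = v := if_neg (by omega)
  have hgedge : ∀ j, j < m + 1 → A (g j) (g (j + 1)) := by
    intro j hj
    rcases Nat.lt_or_eq_of_le (Nat.lt_succ_iff.1 hj) with hj | rfl
    · rw [hgf j hj.le, hgf (j + 1) hj]
      exact hedge j hj
    · rw [hgf j le_rfl, hgv]
      exact huv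
  have hv : ∀ i, i ≤ m → f i ≠ v := fun i hi hfi =>
    hc (hasDiCycle_of_walk hgedge
      (fun a b ha hb hab => hinj a b (by omega) (by omega) (by rwa [hgf a (by omega),
        hgf b (by omega)] at hab))
      (Nat.lt_succ_of_le hi) (by rw [hgf i hi, hgv, hfi]))
  refine ⟨g, fun a b ha hb hab => ?_, hgv, hgedge⟩
  rcases Nat.lt_or_eq_of_le ha with ha | rfl <;> rcases Nat.lt_or_eq_of_le hb with hb | rfl
  · exact hinj a b (by omega) (by omega) (by rwa [hgf a (by omega), hgf b (by omega)] at hab)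
  · exact absurd (by rwa [hgf a (by omega), hgv] at hab) (hv a (by omega))
  · exact absurd (by rwa [hgf b (by omega), hgv, eq_comm] at hab) (hv b (by omega))
  · rfl

theorem label_add_le_of_forall_lt {ℓ : V → ℕ} (hℓ : ∀ u v, A u v → ℓ u < ℓ v) {f : ℕ → V} {m : ℕ}
    (hedge : ∀ i, i < m → A (f i) (f (i + 1))) : ℓ (f 0) + m ≤ ℓ (f m) := by
  induction m with
  | zero => simp
  | succ m ih =>
    have := ih fun i hi => hedge i (by omega)
    have := hℓ _ _ (hedge m (by omega))
    omega

theorem not_hasDiCyclabel_add_le_of_forall_lt (ℓ : V → ℕ) (hℓ : ∀ u v, A u v → ℓ u < ℓ v) :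
    ¬HasDiCycle A := by
  rintro ⟨m, hm, f, -, hfm, hedge⟩
  have := label_add_le_of_forall_lt hℓ hedge
  rw [hfm] at this
  omega

theorem not_hasDiPath_of_forall_lt {k : ℕ} (ℓ : V → ℕ) (hℓ : ∀ u v, A u v → ℓ u < ℓ v)
    (hrange : ∀ v, ℓ v ∈ Icc 1 k) : ¬HasDiPath A k := by
  rintro ⟨f, -, hedge⟩
  have := label_add_le_of_forall_lt hℓ hedge
  have h0 := mem_Icc.1 (hrange (f 0))
  have hk := mem_Icc.1 (hrange (f k))
  omega

theorem exists_forall_lt_of_not_hasDiCycle_of_not_hasDiPath {k : ℕ} (hc : ¬HasDiCycle A)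
    (hp : ¬HasDiPath A k) :
    ∃ ℓ : V → ℕ, (∀ v, ℓ v ∈ Icc 1 k) ∧ ∀ u v, A u v → ℓ u < ℓ v := by
  classical
  set L : V → ℕ := fun v => Nat.findGreatest (HasDiPathTo A v) k
  have hL : ∀ v, HasDiPathTo A v (L v) := fun v =>
    Nat.findGreatest_spec (Nat.zero_le k) (hasDiPathTo_zero v)
  refine ⟨fun v => L v + 1, fun v => mem_Icc.2 ⟨Nat.le_add_left 1 (L v), (hL v).lt_of_not_hasDiPath hp⟩,
    fun u v huv => Nat.succ_le_succ ?_⟩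
  have hext := (hL u).snoc hc huv
  exact Nat.le_findGreatest (hext.lt_of_not_hasDiPath hp).le hext

end Digraph

theorem stmt_14_general {V : Type*} [Fintype V]
    (A : V → V → Prop) [DecidableRel A]
    (w : V → V → ℝ) (hw : ∀ u v, A u v → 0 ≤ w u v) (k : ℕ) :
    sSup {r : ℝ | ∃ ℓ : V → ℕ, (∀ v, ℓ v ∈ Finset.Icc 1 k) ∧
        r = ∑ p ∈ Finset.univ.filter (fun p : V × V => A p.1 p.2 ∧ ℓ p.1 < ℓ p.2),
              w p.1 p.2}
      = sSup {r : ℝ | ∃ A' : Finset (V × V), (∀ p ∈ A', A p.1 p.2) ∧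
          ¬ HasDiCycle (fun u v => (u, v) ∈ A') ∧
          ¬ HasDiPath (fun u v => (u, v) ∈ A') k ∧
          r = ∑ p ∈ A', w p.1 p.2} := by
  refine csSup_eq_csSup_of_forall_exists_le ?_ ?_
  · rintro _ ⟨ℓ, hℓ, rfl⟩
    have hlt : ∀ u v, (u, v) ∈ univ.filter (fun p : V × V => A p.1 p.2 ∧ ℓ p.1 < ℓ p.2) →
        ℓ u < ℓ v := fun u v h => (mem_filter.1 h).2.2
    exact ⟨_, ⟨_, fun p hp => (mem_filter.1 hp).2.1, not_hasDiCyclabel_add_le_of_forall_lt ℓ hlt,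
      not_hasDiPath_of_forall_lt ℓ hlt hℓ, rfl⟩, le_rfl⟩
  · rintro _ ⟨A', hA', hc, hp, rfl⟩
    obtain ⟨ℓ, hℓ, hlt⟩ := exists_forall_lt_of_not_hasDiCycle_of_not_hasDiPath hc hp
    refine ⟨_, ⟨ℓ, hℓ, rfl⟩, sum_le_sum_of_subset_of_nonneg (fun p hp => ?_)
      fun p hp _ => hw _ _ (mem_filter.1 hp).2.1⟩
    exact mem_filter.2 ⟨mem_univ _, hA' p hp, hlt _ _ hp⟩

/-- For a finite digraph `D = (V, A)` with nonnegative edge weights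
`w` and `k ≥ 1`, the maximum over labelings `ℓ : V → [k]` of the total weight of edges
`(u,v)` with `ℓ u < ℓ v` equals the maximum weight of a subset `A' ⊆ A` of edges such
that `(V, A')` has no directed cycle and no directed path of length `k`. -/
theorem stmt_14 {V : Type*} [Fintype V] [DecidableEq V]
    (A : V → V → Prop) [DecidableRel A]
    (w : V → V → ℝ) (hw : ∀ u v, A u v → 0 ≤ w u v) (k : ℕ) (hk : 1 ≤ k) :
    sSup {r : ℝ | ∃ ℓ : V → ℕ, (∀ v, ℓ v ∈ Finset.Icc 1 k) ∧
        r = ∑ p ∈ Finset.univ.filter (fun p : V × V => A p.1 p.2 ∧ ℓ p.1 < ℓ p.2),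
              w p.1 p.2}
      = sSup {r : ℝ | ∃ A' : Finset (V × V), (∀ p ∈ A', A p.1 p.2) ∧
          ¬ HasDiCycle (fun u v => (u, v) ∈ A') ∧
          ¬ HasDiPath (fun u v => (u, v) ∈ A') k ∧
          r = ∑ p ∈ A', w p.1 p.2} :=
  stmt_14_general A w hw k
end
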